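/- Let α ∈ (0,1). With H(ρ,w) = |w|²/ρ^α for ρ > 0, H(0,0) = 0, H = +∞ otherwise, the subdifferential of H at points of ℝ_+ × ℝ^d is: ∂H(ρ,w) = {(−α|w|²/ρ^{α+1}, 2w/ρ^α)} if ρ > 0, and ∂H(0,0) = ℝ_− × {0}. -/

import Mathlib

open scoped RealInnerProductSpace
open Classical

/-- `H(ρ,w) = |w|²/ρ^α` if `ρ > 0`, `H(0,0) = 0`, `+∞` otherwise. -/
noncomputable def Hfun (d : ℕ) (α : ℝ) (p : ℝ × EuclideanSpace ℝ (Fin d)) : EReal :=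
  if 0 < p.1 then ((‖p.2‖ ^ 2 / p.1 ^ α : ℝ) : EReal)
  else if p.1 = 0 ∧ p.2 = 0 then 0 else ⊤

/-- The convex subdifferential of `H` at `p`: the set of `(a,b)` such that
`H(p') ≥ H(p) + a(ρ'−ρ) + ⟨b, w'−w⟩` for all `p' = (ρ',w')`. -/
def subdiffH (d : ℕ) (α : ℝ) (p : ℝ × EuclideanSpace ℝ (Fin d)) :
    Set (ℝ × EuclideanSpace ℝ (Fin d)) :=
  {q | ∀ p' : ℝ × EuclideanSpace ℝ (Fin d),
    Hfun d α p + ((q.1 * (p'.1 - p.1) + ⟪q.2, p'.2 - p.2⟫ : ℝ) : EReal) ≤ Hfun d α p'}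

/-!
For `ρ > 0` the function `H` is differentiable, so a subgradient must be its gradient (test along
the two coordinate directions); conversely the gradient is a subgradient because `H` lies above its
tangent plane: Bernoulli's inequality `(ρ'/ρ)^α ≤ 1 + α (ρ'/ρ - 1)` handles the `ρ`-direction and
`|w'|²/Y ≥ 2⟨w,w'⟩/X - |w|² Y/X²` (a completed square) the `w`-direction. At the origin, testing
a subgradient `(a, b)` against `(t, (t^α/2) b)` gives `|b|² ≤ -4a t^(1-α) → 0` as `t → 0⁺`,
because `α < 1`.
-/

open Filter Topology

theorem HasDerivAt.eq_of_eventually_add_mul_sub_le {f : ℝ → ℝ} {f' x a : ℝ}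
    (hf : HasDerivAt f f' x) (h : ∀ᶠ y in 𝓝 x, f x + a * (y - x) ≤ f y) : a = f' := by
  have hmin : IsLocalMin (fun y => f y - a * (y - x)) x := by
    filter_upwards [h] with y hy
    simp only [sub_self, mul_zero, sub_zero]
    linarith
  have hderiv : HasDerivAt (fun y => f y - a * (y - x)) (f' - a) x := by
    have hline : HasDerivAt (fun y => a * (y - x)) a x := by
      simpa using ((hasDerivAt_id x).sub_const x).const_mul a
    exact hf.sub hline
  linarith [hmin.hasDerivAt_eq_zero hderiv]

theorem hasDerivAt_div_rpow (c : ℝ) {α ρ : ℝ} (hρ : 0 < ρ) :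
    HasDerivAt (fun y => c / y ^ α) (-α * c / ρ ^ (α + 1)) ρ := by
  refine ((hasDerivAt_const ρ c).div (Real.hasDerivAt_rpow_const (p := α) (Or.inl hρ.ne'))
    (Real.rpow_pos_of_pos hρ α).ne').congr_deriv ?_
  rw [Real.rpow_add hρ, Real.rpow_sub hρ, Real.rpow_one]
  have := (Real.rpow_pos_of_pos hρ α).ne'
  field_simp
  ring

section InnerProductSpace

variable {E : Type*} [NormedAddCommGroup E] [InnerProductSpace ℝ E]

theorem eq_smul_of_forall_add_inner_le_mul_norm_sq {c : ℝ} {w b : E}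
    (h : ∀ w', c * ‖w‖ ^ 2 + ⟪b, w' - w⟫ ≤ c * ‖w'‖ ^ 2) : b = (2 * c) • w := by
  refine ext_inner_right ℝ fun v => ?_
  have hderiv : HasDerivAt (fun t : ℝ => c * ‖w + t • v‖ ^ 2) (c * (2 * ⟪w, v⟫)) 0 := by
    simpa using ((((hasDerivAt_id (0 : ℝ)).smul_const v).const_add w).norm_sq).const_mul c
  have hsub : ∀ᶠ t in 𝓝 (0 : ℝ), c * ‖w + (0 : ℝ) • v‖ ^ 2 + ⟪b, v⟫ * (t - 0)
      ≤ c * ‖w + t • v‖ ^ 2 :=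
    Eventually.of_forall fun t => by
      simpa [real_inner_smul_right, mul_comm] using h (w + t • v)
  rw [hderiv.eq_of_eventually_add_mul_sub_le hsub, real_inner_smul_left]
  ring

theorem two_inner_div_sub_le_norm_sq_div {X Y : ℝ} (hX : 0 < X) (hY : 0 < Y) (w w' : E) :
    2 * ⟪w, w'⟫ / X - ‖w‖ ^ 2 * Y / X ^ 2 ≤ ‖w'‖ ^ 2 / Y := by
  have hsq : ‖w'‖ ^ 2 / Y - (2 * ⟪w, w'⟫ / X - ‖w‖ ^ 2 * Y / X ^ 2)
      = ‖(Y / X) • w - w'‖ ^ 2 / Y := by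
    rw [norm_sub_sq_real, norm_smul, real_inner_smul_left, Real.norm_eq_abs,
      abs_of_pos (div_pos hY hX)]
    field_simp
    ring
  have : 0 ≤ ‖(Y / X) • w - w'‖ ^ 2 / Y := by positivity
  linarith

theorem norm_sq_div_rpow_add_le_two_inner_div_sub {α ρ ρ' : ℝ} (hα0 : 0 ≤ α) (hα1 : α ≤ 1)
    (hρ : 0 < ρ) (hρ' : 0 ≤ ρ') (w w' : E) :
    ‖w‖ ^ 2 / ρ ^ α + (-α * ‖w‖ ^ 2 / ρ ^ (α + 1) * (ρ' - ρ) + ⟪(2 / ρ ^ α) • w, w' - w⟫)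
      ≤ 2 * ⟪w, w'⟫ / ρ ^ α - ‖w‖ ^ 2 * ρ' ^ α / (ρ ^ α) ^ 2 := by
  have hX : 0 < ρ ^ α := Real.rpow_pos_of_pos hρ α
  have bernoulli : ρ' ^ α / ρ ^ α ≤ 1 + α * (ρ' / ρ - 1) := by
    have h := rpow_one_add_le_one_add_mul_self (s := ρ' / ρ - 1)
      (by linarith [div_nonneg hρ' hρ.le]) hα0 hα1
    rwa [add_sub_cancel, Real.div_rpow hρ' hρ.le] at h
  calc _ = 2 * ⟪w, w'⟫ / ρ ^ α - ‖w‖ ^ 2 * (1 + α * (ρ' / ρ - 1)) / ρ ^ α := by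
        rw [Real.rpow_add hρ, Real.rpow_one, real_inner_smul_left, inner_sub_right,
          real_inner_self_eq_norm_sq]
        field_simp
        ring
    _ ≤ 2 * ⟪w, w'⟫ / ρ ^ α - ‖w‖ ^ 2 * (ρ' ^ α / ρ ^ α) / ρ ^ α := by gcongr
    _ = _ := by ring

theorem eq_zero_of_forall_mul_add_inner_le {α a : ℝ} (hα1 : α < 1) {b : E}
    (h : ∀ t > 0, ∀ w' : E, a * t + ⟪b, w'⟫ ≤ ‖w'‖ ^ 2 / t ^ α) : b = 0 := by
  have hbound : ∀ t > 0, ‖b‖ ^ 2 ≤ -4 * a * t ^ (1 - α) := by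
    intro t ht
    have hX : 0 < t ^ α := Real.rpow_pos_of_pos ht α
    have ht' := h t ht ((t ^ α / 2) • b)
    rw [real_inner_smul_right, real_inner_self_eq_norm_sq, norm_smul, Real.norm_eq_abs,
      abs_of_pos (by positivity)] at ht'
    rw [Real.rpow_sub ht, Real.rpow_one, mul_div_assoc', le_div_iff₀ hX]
    have : (t ^ α / 2 * ‖b‖) ^ 2 / t ^ α = t ^ α * ‖b‖ ^ 2 / 4 := by
      field_simp
      ring
    nlinarith
  have hlim : Tendsto (fun t : ℝ => -4 * a * t ^ (1 - α)) (𝓝[>] 0) (𝓝 0) := by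
    have hcont := (Real.continuousAt_rpow_const 0 (1 - α) (Or.inr (by linarith))).tendsto
    rw [Real.zero_rpow (by linarith)] at hcont
    simpa using (hcont.mono_left nhdsWithin_le_nhds).const_mul (-4 * a)
  have : ‖b‖ ^ 2 ≤ 0 := ge_of_tendsto hlim (eventually_nhdsWithin_of_forall hbound)
  simpa using this

end InnerProductSpace

section Hfun

variable {d : ℕ} {α : ℝ}

theorem Hfun_of_pos {ρ : ℝ} (hρ : 0 < ρ) (w : EuclideanSpace ℝ (Fin d)) :
    Hfun d α (ρ, w) = ((‖w‖ ^ 2 / ρ ^ α : ℝ) : EReal) :=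
  if_pos hρ

theorem Hfun_zero : Hfun d α (0, 0) = ((0 : ℝ) : EReal) := by
  simp [Hfun]

theorem mem_subdiffH_iff {p q : ℝ × EuclideanSpace ℝ (Fin d)} {h : ℝ}
    (hp : Hfun d α p = h) :
    q ∈ subdiffH d α p ↔
      (∀ ρ' > 0, ∀ w', h + (q.1 * (ρ' - p.1) + ⟪q.2, w' - p.2⟫) ≤ ‖w'‖ ^ 2 / ρ' ^ α) ∧
        h + (q.1 * (0 - p.1) + ⟪q.2, 0 - p.2⟫) ≤ 0 := by
  simp only [subdiffH, Set.mem_ofPred_eq, hp, ← EReal.coe_add]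
  refine ⟨fun hq => ⟨fun ρ' hρ' w' => ?_, ?_⟩, fun ⟨hpos, hzero⟩ ⟨ρ', w'⟩ => ?_⟩
  · have hq' := hq (ρ', w')
    rwa [Hfun_of_pos hρ', EReal.coe_le_coe_iff] at hq'
  · have hq' := hq (0, 0)
    rwa [Hfun_zero, EReal.coe_le_coe_iff] at hq'
  · by_cases hρ' : 0 < ρ'
    · rw [Hfun_of_pos hρ', EReal.coe_le_coe_iff]
      exact hpos ρ' hρ' w'
    by_cases h0 : ρ' = 0 ∧ w' = 0
    · obtain ⟨rfl, rfl⟩ := h0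
      rw [Hfun_zero, EReal.coe_le_coe_iff]
      exact hzero
    · simp [Hfun, hρ', h0]

theorem subdiffH_of_pos (hα0 : 0 < α) (hα1 : α < 1) {ρ : ℝ} (hρ : 0 < ρ)
    (w : EuclideanSpace ℝ (Fin d)) :
    subdiffH d α (ρ, w) = {(-α * ‖w‖ ^ 2 / ρ ^ (α + 1), ((2 : ℝ) / ρ ^ α) • w)} := by
  ext ⟨a, b⟩
  rw [mem_subdiffH_iff (Hfun_of_pos hρ w), Set.mem_singleton_iff, Prod.mk.injEq]
  constructor
  · rintro ⟨hsub, -⟩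
    refine ⟨(hasDerivAt_div_rpow _ hρ).eq_of_eventually_add_mul_sub_le ?_, ?_⟩
    · filter_upwards [eventually_gt_nhds hρ] with ρ' hρ'
      simpa using hsub ρ' hρ' w
    · rw [div_eq_mul_inv]
      refine eq_smul_of_forall_add_inner_le_mul_norm_sq fun w' => ?_
      have h := hsub ρ hρ w'
      rwa [sub_self, mul_zero, zero_add, div_eq_inv_mul, div_eq_inv_mul] at h
  · rintro ⟨rfl, rfl⟩
    refine ⟨fun ρ' hρ' w' => ?_, ?_⟩
    · exact (norm_sq_div_rpow_add_le_two_inner_div_sub hα0.le hα1.le hρ hρ'.le w w').trans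
        (two_inner_div_sub_le_norm_sq_div (Real.rpow_pos_of_pos hρ α)
          (Real.rpow_pos_of_pos hρ' α) w w')
    · simpa [Real.zero_rpow hα0.ne'] using
        norm_sq_div_rpow_add_le_two_inner_div_sub hα0.le hα1.le hρ le_rfl w 0

theorem subdiffH_zero (hα1 : α < 1) : subdiffH d α (0, 0) = {q | q.1 ≤ 0 ∧ q.2 = 0} := by
  ext ⟨a, b⟩
  rw [mem_subdiffH_iff Hfun_zero]
  constructor
  · rintro ⟨hsub, -⟩
    have hsub' : ∀ t > 0, ∀ w', a * t + ⟪b, w'⟫ ≤ ‖w'‖ ^ 2 / t ^ α := by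
      simpa using hsub
    exact ⟨by simpa using hsub' 1 one_pos 0, eq_zero_of_forall_mul_add_inner_le hα1 hsub'⟩
  · rintro ⟨ha, rfl⟩
    refine ⟨fun ρ' hρ' w' => ?_, by simp⟩
    have : a * ρ' ≤ 0 := mul_nonpos_of_nonpos_of_nonneg ha hρ'.le
    simpa using this.trans (by positivity)

end Hfun

theorem subdiffH_eq_general (d : ℕ) (α : ℝ) (hα0 : 0 < α) (hα1 : α < 1) :
    (∀ (ρ : ℝ) (w : EuclideanSpace ℝ (Fin d)), 0 < ρ →
      subdiffH d α (ρ, w) =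
        {(-α * ‖w‖ ^ 2 / ρ ^ (α + 1), ((2 : ℝ) / ρ ^ α) • w)}) ∧
    subdiffH d α (0, 0) = {q | q.1 ≤ 0 ∧ q.2 = 0} :=
  ⟨fun _ w hρ => subdiffH_of_pos hα0 hα1 hρ w, subdiffH_zero hα1⟩

/-- for `ρ > 0`, `∂H(ρ,w) = {(−α|w|²/ρ^{α+1}, 2w/ρ^α)}`, and
`∂H(0,0) = ℝ₋ × {0}`. -/
theorem subdiffH_eq (d : ℕ) (hd : 1 ≤ d) (α : ℝ) (hα0 : 0 < α) (hα1 : α < 1) :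
    (∀ (ρ : ℝ) (w : EuclideanSpace ℝ (Fin d)), 0 < ρ →
      subdiffH d α (ρ, w) =
        {(-α * ‖w‖ ^ 2 / ρ ^ (α + 1), ((2 : ℝ) / ρ ^ α) • w)}) ∧
    subdiffH d α (0, 0) = {q | q.1 ≤ 0 ∧ q.2 = 0} :=
  subdiffH_eq_general d α hα0 hα1
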